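/- The autoinformation gap decomposes exactly as AI(x_t; τ) − AI(z_t; τ) = I(z_t; x_{t+τ} | z_{t+τ}) + I(x_t; x_{t+τ} | z_t), where z_t and z_{t+τ} are noisy functions of x_t and x_{t+τ} respectively. -/
import Mathlib


open Finset

/-- Probability mass function of a random variable `X : Ω → α` under the weight `μ`. -/
def pmfOf {Ω α : Type} [Fintype Ω] [DecidableEq α] (μ : Ω → ℝ) (X : Ω → α) (a : α) : ℝ :=
  ∑ ω ∈ Finset.univ.filter (fun ω => X ω = a), μ ω

/-- `μ` is a probability mass function on the finite sample space `Ω`. -/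
def IsPMF {Ω : Type} [Fintype Ω] (μ : Ω → ℝ) : Prop :=
  (∀ ω, 0 ≤ μ ω) ∧ ∑ ω, μ ω = 1

/-- Mutual information `I(X; Y)` of two finite-valued random variables. -/
noncomputable def mi {Ω α β : Type} [Fintype Ω] [Fintype α] [DecidableEq α]
    [Fintype β] [DecidableEq β] (μ : Ω → ℝ) (X : Ω → α) (Y : Ω → β) : ℝ :=
  ∑ a : α, ∑ b : β,
    pmfOf μ (fun ω => (X ω, Y ω)) (a, b) *
      Real.log (pmfOf μ (fun ω => (X ω, Y ω)) (a, b) / (pmfOf μ X a * pmfOf μ Y b))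

/-- Conditional mutual information `I(X; Y | Z)` of finite-valued random variables. -/
noncomputable def cmi {Ω α β γ : Type} [Fintype Ω] [Fintype α] [DecidableEq α]
    [Fintype β] [DecidableEq β] [Fintype γ] [DecidableEq γ]
    (μ : Ω → ℝ) (X : Ω → α) (Y : Ω → β) (Z : Ω → γ) : ℝ :=
  ∑ a : α, ∑ b : β, ∑ c : γ,
    pmfOf μ (fun ω => (X ω, Y ω, Z ω)) (a, b, c) *
      Real.log (pmfOf μ (fun ω => (X ω, Y ω, Z ω)) (a, b, c) * pmfOf μ Z c /
        (pmfOf μ (fun ω => (X ω, Z ω)) (a, c) * pmfOf μ (fun ω => (Y ω, Z ω)) (b, c)))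

/-- Conditional pmf `P(X = a | Y = b)`. -/
noncomputable def condPMF {Ω α β : Type} [Fintype Ω] [DecidableEq α] [DecidableEq β]
    (μ : Ω → ℝ) (X : Ω → α) (Y : Ω → β) (a : α) (b : β) : ℝ :=
  pmfOf μ (fun ω => (X ω, Y ω)) (a, b) / pmfOf μ Y b

/-- Independence of two finite-valued random variables. -/
def IndepRV {Ω α β : Type} [Fintype Ω] [Fintype α] [DecidableEq α]
    [Fintype β] [DecidableEq β] (μ : Ω → ℝ) (X : Ω → α) (Y : Ω → β) : Prop :=
  ∀ a b, pmfOf μ (fun ω => (X ω, Y ω)) (a, b) = pmfOf μ X a * pmfOf μ Y b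


lemma pmfOf_nonneg' {Ω α : Type} [Fintype Ω] [DecidableEq α] {μ : Ω → ℝ} (hμ : ∀ ω, 0 ≤ μ ω)
    (X : Ω → α) (a : α) : 0 ≤ pmfOf μ X a :=
  Finset.sum_nonneg fun ω _ => hμ ω

lemma sum_pmfOf' {Ω α : Type} [Fintype Ω] [Fintype α] [DecidableEq α] (μ : Ω → ℝ) (X : Ω → α) :
    ∑ a, pmfOf μ X a = ∑ ω, μ ω :=
  Finset.sum_fiberwise Finset.univ X μ

lemma pmfOf_comp' {Ω T β : Type} [Fintype Ω] [Fintype T] [DecidableEq T] [DecidableEq β]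
    (μ : Ω → ℝ) (Q : Ω → T) (g : T → β) (b : β) :
    pmfOf μ (fun ω => g (Q ω)) b = pmfOf (pmfOf μ Q) g b := by
  rw [eq_comm]
  unfold pmfOf
  rw [Finset.sum_fiberwise_eq_sum_filter]
  exact Finset.sum_congr (by ext ω; simp) (fun _ _ => rfl)

lemma mi_comp' {Ω T α β : Type} [Fintype Ω] [Fintype T] [DecidableEq T]
    [Fintype α] [DecidableEq α] [Fintype β] [DecidableEq β]
    (μ : Ω → ℝ) (Q : Ω → T) (g : T → α) (h : T → β) :
    mi μ (fun ω => g (Q ω)) (fun ω => h (Q ω)) = mi (pmfOf μ Q) g h := by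
  unfold mi
  refine Finset.sum_congr rfl fun a _ => Finset.sum_congr rfl fun b _ => ?_
  rw [pmfOf_comp' μ Q (fun t => (g t, h t)) (a, b), pmfOf_comp' μ Q g a, pmfOf_comp' μ Q h b]

lemma cmi_comp' {Ω T α β γ : Type} [Fintype Ω] [Fintype T] [DecidableEq T]
    [Fintype α] [DecidableEq α] [Fintype β] [DecidableEq β] [Fintype γ] [DecidableEq γ]
    (μ : Ω → ℝ) (Q : Ω → T) (g : T → α) (h : T → β) (k : T → γ) :
    cmi μ (fun ω => g (Q ω)) (fun ω => h (Q ω)) (fun ω => k (Q ω)) = cmi (pmfOf μ Q) g h k := by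
  unfold cmi
  refine Finset.sum_congr rfl fun a _ => Finset.sum_congr rfl fun b _ =>
    Finset.sum_congr rfl fun c _ => ?_
  rw [pmfOf_comp' μ Q (fun t => (g t, h t, k t)) (a, b, c), pmfOf_comp' μ Q k c,
    pmfOf_comp' μ Q (fun t => (g t, k t)) (a, c), pmfOf_comp' μ Q (fun t => (h t, k t)) (b, c)]

lemma sum4_swapB' {α β γ δ : Type} [Fintype α] [Fintype β] [Fintype γ] [Fintype δ]
    (F : α → β → γ → δ → ℝ) :
    (∑ c : γ, ∑ d : δ, ∑ a : α, ∑ b : β, F a b c d) = ∑ a, ∑ b, ∑ c, ∑ d, F a b c d := by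
  calc (∑ c : γ, ∑ d : δ, ∑ a : α, ∑ b : β, F a b c d)
      = ∑ c : γ, ∑ a : α, ∑ d : δ, ∑ b : β, F a b c d :=
        Finset.sum_congr rfl fun c _ => Finset.sum_comm
    _ = ∑ a : α, ∑ c : γ, ∑ d : δ, ∑ b : β, F a b c d := Finset.sum_comm
    _ = ∑ a : α, ∑ c : γ, ∑ b : β, ∑ d : δ, F a b c d :=
        Finset.sum_congr rfl fun a _ => Finset.sum_congr rfl fun c _ => Finset.sum_comm
    _ = ∑ a : α, ∑ b : β, ∑ c : γ, ∑ d : δ, F a b c d :=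
        Finset.sum_congr rfl fun a _ => Finset.sum_comm

lemma sum4_swapA' {α β γ δ : Type} [Fintype α] [Fintype β] [Fintype γ] [Fintype δ]
    (F : α → β → γ → δ → ℝ) :
    (∑ c : γ, ∑ b : β, ∑ d : δ, ∑ a : α, F a b c d) = ∑ a, ∑ b, ∑ c, ∑ d, F a b c d := by
  calc (∑ c : γ, ∑ b : β, ∑ d : δ, ∑ a : α, F a b c d)
      = ∑ c : γ, ∑ b : β, ∑ a : α, ∑ d : δ, F a b c d :=
        Finset.sum_congr rfl fun c _ => Finset.sum_congr rfl fun b _ => Finset.sum_comm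
    _ = ∑ c : γ, ∑ a : α, ∑ b : β, ∑ d : δ, F a b c d :=
        Finset.sum_congr rfl fun c _ => Finset.sum_comm
    _ = ∑ a : α, ∑ c : γ, ∑ b : β, ∑ d : δ, F a b c d := Finset.sum_comm
    _ = ∑ a : α, ∑ b : β, ∑ c : γ, ∑ d : δ, F a b c d :=
        Finset.sum_congr rfl fun a _ => Finset.sum_comm

lemma log_identity' (U U1 U2 Gv Gw M Pz Pz' Pzz : ℝ)
    (hU : 0 < U) (hU1 : 0 < U1) (hU2 : 0 < U2) (hGv : 0 < Gv) (hGw : 0 < Gw)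
    (hM : 0 < M) (hPz : 0 < Pz) (hPz' : 0 < Pz') (hPzz : 0 < Pzz) :
    Real.log (U / (U1 * U2)) - Real.log (Pzz / (Pz * Pz'))
      - Real.log (M * Gw * Pz' / (Pzz * (U2 * Gw)))
      - Real.log (U * Gv * Pz / (U1 * Gv * M)) = 0 := by
  rw [Real.log_div (by positivity) (by positivity),
      Real.log_div (by positivity) (by positivity),
      Real.log_div (by positivity) (by positivity),
      Real.log_div (by positivity) (by positivity),
      Real.log_mul (by positivity) (by positivity),
      Real.log_mul (by positivity) (by positivity),
      Real.log_mul (by positivity) (by positivity),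
      Real.log_mul (by positivity) (by positivity),
      Real.log_mul (by positivity) (by positivity),
      Real.log_mul (by positivity) (by positivity),
      Real.log_mul (by positivity) (by positivity),
      Real.log_mul (by positivity) (by positivity),
      Real.log_mul (by positivity) (by positivity),
      Real.log_mul (by positivity) (by positivity)]
  ring

lemma key' {A Z : Type} [Fintype A] [DecidableEq A] [Fintype Z] [DecidableEq Z]
    (u : A × A → ℝ) (gv gw : A → Z → ℝ)
    (hu : ∀ p, 0 ≤ u p) (hgv : ∀ a c, 0 ≤ gv a c) (hgw : ∀ a c, 0 ≤ gw a c)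
    (hgv1 : ∀ a, ∑ c, gv a c = 1) (hgw1 : ∀ a, ∑ c, gw a c = 1)
    (P : A × A × Z × Z → ℝ)
    (hP : P = fun q => u (q.1, q.2.1) * gv q.1 q.2.2.1 * gw q.2.1 q.2.2.2) :
    mi P (fun q => q.1) (fun q => q.2.1) - mi P (fun q => q.2.2.1) (fun q => q.2.2.2)
      = cmi P (fun q => q.2.2.1) (fun q => q.2.1) (fun q => q.2.2.2)
        + cmi P (fun q => q.1) (fun q => q.2.1) (fun q => q.2.2.1) := by
  subst hP
  -- marginal formulas
  have h1 : ∀ a b : A, pmfOf (fun q : A × A × Z × Z => u (q.1, q.2.1) * gv q.1 q.2.2.1 * gw q.2.1 q.2.2.2)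
      (fun q => (q.1, q.2.1)) (a, b) = u (a, b) := by
    intro a b
    unfold pmfOf
    rw [Finset.sum_filter]
    simp [Fintype.sum_prod_type, Prod.mk.injEq, ite_and, ← Finset.sum_mul, ← Finset.mul_sum,
      hgv1, hgw1]
  have h2 : ∀ a : A, pmfOf (fun q : A × A × Z × Z => u (q.1, q.2.1) * gv q.1 q.2.2.1 * gw q.2.1 q.2.2.2)
      (fun q => q.1) a = ∑ b, u (a, b) := by
    intro a
    unfold pmfOf
    rw [Finset.sum_filter]
    simp [Fintype.sum_prod_type, Prod.mk.injEq, ite_and, ← Finset.sum_mul, ← Finset.mul_sum,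
      hgv1, hgw1]
  have h3 : ∀ b : A, pmfOf (fun q : A × A × Z × Z => u (q.1, q.2.1) * gv q.1 q.2.2.1 * gw q.2.1 q.2.2.2)
      (fun q => q.2.1) b = ∑ a, u (a, b) := by
    intro b
    unfold pmfOf
    rw [Finset.sum_filter]
    simp [Fintype.sum_prod_type, Prod.mk.injEq, ite_and, ← Finset.sum_mul, ← Finset.mul_sum,
      hgv1, hgw1]
  have h4 : ∀ (c c' : Z), pmfOf (fun q : A × A × Z × Z => u (q.1, q.2.1) * gv q.1 q.2.2.1 * gw q.2.1 q.2.2.2)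
      (fun q => (q.2.2.1, q.2.2.2)) (c, c') = ∑ a, ∑ b, u (a, b) * gv a c * gw b c' := by
    intro c c'
    unfold pmfOf
    rw [Finset.sum_filter]
    simp [Fintype.sum_prod_type, Prod.mk.injEq, ite_and, ← Finset.sum_mul, ← Finset.mul_sum,
      hgv1, hgw1]
  have h5 : ∀ c : Z, pmfOf (fun q : A × A × Z × Z => u (q.1, q.2.1) * gv q.1 q.2.2.1 * gw q.2.1 q.2.2.2)
      (fun q => q.2.2.1) c = ∑ a, ∑ b, u (a, b) * gv a c := by
    intro c
    unfold pmfOf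
    rw [Finset.sum_filter]
    simp [Fintype.sum_prod_type, Prod.mk.injEq, ite_and, ← Finset.sum_mul, ← Finset.mul_sum,
      hgv1, hgw1]
  have h6 : ∀ c' : Z, pmfOf (fun q : A × A × Z × Z => u (q.1, q.2.1) * gv q.1 q.2.2.1 * gw q.2.1 q.2.2.2)
      (fun q => q.2.2.2) c' = ∑ a, ∑ b, u (a, b) * gw b c' := by
    intro c'
    unfold pmfOf
    rw [Finset.sum_filter]
    simp [Fintype.sum_prod_type, Prod.mk.injEq, ite_and, ← Finset.sum_mul, ← Finset.mul_sum,
      hgv1, hgw1]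
  have h7 : ∀ (c : Z) (b : A) (c' : Z), pmfOf (fun q : A × A × Z × Z => u (q.1, q.2.1) * gv q.1 q.2.2.1 * gw q.2.1 q.2.2.2)
      (fun q => (q.2.2.1, q.2.1, q.2.2.2)) (c, b, c') = (∑ a, u (a, b) * gv a c) * gw b c' := by
    intro c b c'
    unfold pmfOf
    rw [Finset.sum_filter]
    simp [Fintype.sum_prod_type, Prod.mk.injEq, ite_and, ← Finset.sum_mul, ← Finset.mul_sum,
      hgv1, hgw1]
  have h8 : ∀ (b : A) (c' : Z), pmfOf (fun q : A × A × Z × Z => u (q.1, q.2.1) * gv q.1 q.2.2.1 * gw q.2.1 q.2.2.2)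
      (fun q => (q.2.1, q.2.2.2)) (b, c') = (∑ a, u (a, b)) * gw b c' := by
    intro b c'
    unfold pmfOf
    rw [Finset.sum_filter]
    simp [Fintype.sum_prod_type, Prod.mk.injEq, ite_and, ← Finset.sum_mul, ← Finset.mul_sum,
      hgv1, hgw1]
  have h9 : ∀ (a b : A) (c : Z), pmfOf (fun q : A × A × Z × Z => u (q.1, q.2.1) * gv q.1 q.2.2.1 * gw q.2.1 q.2.2.2)
      (fun q => (q.1, q.2.1, q.2.2.1)) (a, b, c) = u (a, b) * gv a c := by
    intro a b c
    unfold pmfOf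
    rw [Finset.sum_filter]
    simp [Fintype.sum_prod_type, Prod.mk.injEq, ite_and, ← Finset.sum_mul, ← Finset.mul_sum,
      hgv1, hgw1]
  have h10 : ∀ (a : A) (c : Z), pmfOf (fun q : A × A × Z × Z => u (q.1, q.2.1) * gv q.1 q.2.2.1 * gw q.2.1 q.2.2.2)
      (fun q => (q.1, q.2.2.1)) (a, c) = (∑ b, u (a, b)) * gv a c := by
    intro a c
    unfold pmfOf
    rw [Finset.sum_filter]
    simp [Fintype.sum_prod_type, Prod.mk.injEq, ite_and, ← Finset.sum_mul, ← Finset.mul_sum,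
      hgv1, hgw1]
  have h11 : ∀ (b : A) (c : Z), pmfOf (fun q : A × A × Z × Z => u (q.1, q.2.1) * gv q.1 q.2.2.1 * gw q.2.1 q.2.2.2)
      (fun q => (q.2.1, q.2.2.1)) (b, c) = ∑ a, u (a, b) * gv a c := by
    intro b c
    unfold pmfOf
    rw [Finset.sum_filter]
    simp [Fintype.sum_prod_type, Prod.mk.injEq, ite_and, ← Finset.sum_mul, ← Finset.mul_sum,
      hgv1, hgw1]
  -- collapse lemmas
  have collapse1 : ∀ (a b : A) (c : Z) (r : ℝ),
      (∑ c' : Z, (u (a, b) * gv a c * gw b c') * r) = (u (a, b) * gv a c) * r := by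
    intro a b c r
    rw [← Finset.sum_mul, ← Finset.mul_sum, hgw1 b, mul_one]
  have collapse0 : ∀ (a b : A) (r : ℝ),
      (∑ c : Z, ∑ c' : Z, (u (a, b) * gv a c * gw b c') * r) = u (a, b) * r := by
    intro a b r
    simp only [collapse1]
    rw [← Finset.sum_mul, ← Finset.mul_sum, hgv1 a, mul_one]
  have emi1 : mi (fun q : A × A × Z × Z => u (q.1, q.2.1) * gv q.1 q.2.2.1 * gw q.2.1 q.2.2.2)
      (fun q => q.1) (fun q => q.2.1)
      = ∑ a : A, ∑ b : A, ∑ c : Z, ∑ c' : Z, (u (a, b) * gv a c * gw b c') *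
          Real.log (u (a, b) / ((∑ b0, u (a, b0)) * (∑ a0, u (a0, b)))) := by
    unfold mi
    simp only [h1, h2, h3]
    exact Finset.sum_congr rfl fun a _ => Finset.sum_congr rfl fun b _ => (collapse0 a b _).symm
  have emi2 : mi (fun q : A × A × Z × Z => u (q.1, q.2.1) * gv q.1 q.2.2.1 * gw q.2.1 q.2.2.2)
      (fun q => q.2.2.1) (fun q => q.2.2.2)
      = ∑ a : A, ∑ b : A, ∑ c : Z, ∑ c' : Z, (u (a, b) * gv a c * gw b c') *
          Real.log ((∑ a0, ∑ b0, u (a0, b0) * gv a0 c * gw b0 c') /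
            ((∑ a0, ∑ b0, u (a0, b0) * gv a0 c) * (∑ a0, ∑ b0, u (a0, b0) * gw b0 c'))) := by
    unfold mi
    simp only [h4, h5, h6]
    rw [← sum4_swapB']
    simp only [Finset.sum_mul]
  have ecmi1 : cmi (fun q : A × A × Z × Z => u (q.1, q.2.1) * gv q.1 q.2.2.1 * gw q.2.1 q.2.2.2)
      (fun q => q.2.2.1) (fun q => q.2.1) (fun q => q.2.2.2)
      = ∑ a : A, ∑ b : A, ∑ c : Z, ∑ c' : Z, (u (a, b) * gv a c * gw b c') *
          Real.log ((∑ a0, u (a0, b) * gv a0 c) * gw b c' * (∑ a0, ∑ b0, u (a0, b0) * gw b0 c') /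
            ((∑ a0, ∑ b0, u (a0, b0) * gv a0 c * gw b0 c') * ((∑ a0, u (a0, b)) * gw b c'))) := by
    unfold cmi
    simp only [h7, h6, h4, h8]
    rw [← sum4_swapA']
    simp only [Finset.sum_mul]
  have ecmi2 : cmi (fun q : A × A × Z × Z => u (q.1, q.2.1) * gv q.1 q.2.2.1 * gw q.2.1 q.2.2.2)
      (fun q => q.1) (fun q => q.2.1) (fun q => q.2.2.1)
      = ∑ a : A, ∑ b : A, ∑ c : Z, ∑ c' : Z, (u (a, b) * gv a c * gw b c') *
          Real.log (u (a, b) * gv a c * (∑ a0, ∑ b0, u (a0, b0) * gv a0 c) /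
            ((∑ b0, u (a, b0)) * gv a c * (∑ a0, u (a0, b) * gv a0 c))) := by
    unfold cmi
    simp only [h9, h5, h10, h11]
    refine Finset.sum_congr rfl fun a _ => Finset.sum_congr rfl fun b _ =>
      Finset.sum_congr rfl fun c _ => (collapse1 a b c _).symm
  rw [emi1, emi2, ecmi1, ecmi2]
  simp only [← Finset.sum_sub_distrib, ← Finset.sum_add_distrib]
  refine Finset.sum_congr rfl fun a _ => Finset.sum_congr rfl fun b _ =>
    Finset.sum_congr rfl fun c _ => Finset.sum_congr rfl fun c' _ => ?_
  by_cases hu0 : u (a, b) = 0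
  · simp [hu0]
  by_cases hgv0 : gv a c = 0
  · simp [hgv0]
  by_cases hgw0 : gw b c' = 0
  · simp [hgw0]
  have hU : 0 < u (a, b) := (hu _).lt_of_ne (Ne.symm hu0)
  have hGv : 0 < gv a c := (hgv a c).lt_of_ne (Ne.symm hgv0)
  have hGw : 0 < gw b c' := (hgw b c').lt_of_ne (Ne.symm hgw0)
  have hU1 : 0 < ∑ b0, u (a, b0) :=
    lt_of_lt_of_le hU (Finset.single_le_sum (fun i _ => hu (a, i)) (Finset.mem_univ b))
  have hU2 : 0 < ∑ a0, u (a0, b) :=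
    lt_of_lt_of_le hU (Finset.single_le_sum (fun i _ => hu (i, b)) (Finset.mem_univ a))
  have hM : 0 < ∑ a0, u (a0, b) * gv a0 c :=
    lt_of_lt_of_le (mul_pos hU hGv)
      (Finset.single_le_sum (f := fun i => u (i, b) * gv i c)
        (fun i _ => mul_nonneg (hu _) (hgv _ _)) (Finset.mem_univ a))
  have hPz : 0 < ∑ a0, ∑ b0, u (a0, b0) * gv a0 c := by
    refine lt_of_lt_of_le (mul_pos hU hGv) (le_trans
      (Finset.single_le_sum (f := fun i => u (a, i) * gv a c)
        (fun i _ => mul_nonneg (hu _) (hgv _ _)) (Finset.mem_univ b)) ?_)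
    exact Finset.single_le_sum (f := fun i => ∑ b0, u (i, b0) * gv i c)
      (fun i _ => Finset.sum_nonneg fun j _ => mul_nonneg (hu _) (hgv _ _)) (Finset.mem_univ a)
  have hPz' : 0 < ∑ a0, ∑ b0, u (a0, b0) * gw b0 c' := by
    refine lt_of_lt_of_le (mul_pos hU hGw) (le_trans
      (Finset.single_le_sum (f := fun i => u (a, i) * gw i c')
        (fun i _ => mul_nonneg (hu _) (hgw _ _)) (Finset.mem_univ b)) ?_)
    exact Finset.single_le_sum (f := fun i => ∑ b0, u (i, b0) * gw b0 c')
      (fun i _ => Finset.sum_nonneg fun j _ => mul_nonneg (hu _) (hgw _ _)) (Finset.mem_univ a)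
  have hPzz : 0 < ∑ a0, ∑ b0, u (a0, b0) * gv a0 c * gw b0 c' := by
    refine lt_of_lt_of_le (mul_pos (mul_pos hU hGv) hGw) (le_trans
      (Finset.single_le_sum (f := fun i => u (a, i) * gv a c * gw i c')
        (fun i _ => mul_nonneg (mul_nonneg (hu _) (hgv _ _)) (hgw _ _)) (Finset.mem_univ b)) ?_)
    exact Finset.single_le_sum (f := fun i => ∑ b0, u (i, b0) * gv i c * gw b0 c')
      (fun i _ => Finset.sum_nonneg fun j _ => mul_nonneg (mul_nonneg (hu _) (hgv _ _)) (hgw _ _))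
      (Finset.mem_univ a)
  have key0 := log_identity' (u (a, b)) (∑ b0, u (a, b0)) (∑ a0, u (a0, b)) (gv a c) (gw b c')
    (∑ a0, u (a0, b) * gv a0 c) (∑ a0, ∑ b0, u (a0, b0) * gv a0 c)
    (∑ a0, ∑ b0, u (a0, b0) * gw b0 c') (∑ a0, ∑ b0, u (a0, b0) * gv a0 c * gw b0 c')
    hU hU1 hU2 hGv hGw hM hPz hPz' hPzz
  rw [← mul_sub, ← mul_add]
  congr 1
  linarith [key0]

lemma prodsum_helper' {E : Type} [Fintype E] (p q : E → Prop) [DecidablePred p] [DecidablePred q]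
    (k : ℝ) (v w : E → ℝ) :
    (∑ e : E, if p e then (∑ e' : E, if q e' then k * v e * w e' else 0) else 0)
      = k * (∑ e ∈ Finset.univ.filter p, v e) * (∑ e' ∈ Finset.univ.filter q, w e') := by
  rw [Finset.sum_filter, Finset.sum_filter]
  have h : ∀ e : E, (if p e then (∑ e' : E, if q e' then k * v e * w e' else 0) else 0)
      = (if p e then v e else 0) * ∑ e' : E, (if q e' then w e' else 0) * k := by
    intro e
    by_cases hp : p e
    · simp only [hp, if_true, Finset.mul_sum]
      refine Finset.sum_congr rfl fun e' _ => ?_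
      by_cases hq : q e'
      · simp only [hq, if_true]; ring
      · simp [hq]
    · simp [hp]
  rw [Finset.sum_congr rfl fun e _ => h e]
  simp only [← Finset.sum_mul]
  ring

lemma step3' {A E Z : Type} [Fintype A] [DecidableEq A] [Fintype E] [DecidableEq E]
    [Fintype Z] [DecidableEq Z]
    (u : A × A → ℝ) (v w : E → ℝ) (f : A → E → Z) (a b : A) (c c' : Z) :
    pmfOf (fun t : A × A × E × E => u (t.1, t.2.1) * v t.2.2.1 * w t.2.2.2)
      (fun t => (t.1, t.2.1, f t.1 t.2.2.1, f t.2.1 t.2.2.2)) (a, b, c, c')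
      = u (a, b) * pmfOf v (f a) c * pmfOf w (f b) c' := by
  unfold pmfOf
  rw [Finset.sum_filter]
  simp only [Fintype.sum_prod_type, Prod.mk.injEq, ite_and]
  simp
  exact prodsum_helper' (fun e => f a e = c) (fun e' => f b e' = c') (u (a, b)) v w

/-- **Exact decomposition of the autoinformation gap**:
`AI(x_t; τ) − AI(z_t; τ) = I(z_t; x_{t+τ} | z_{t+τ}) + I(x_t; x_{t+τ} | z_t)`,
where `z_t = f(x_t, ε_t)` and `z_{t+τ} = f(x_{t+τ}, ε_{t+τ})` are noisy functions of
`x_t`, `x_{t+τ}` with independent noise. -/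
theorem autoinfo_gap_decomposition {Ω A E Z : Type} [Fintype Ω]
    [Fintype A] [DecidableEq A] [Fintype E] [DecidableEq E] [Fintype Z] [DecidableEq Z]
    (μ : Ω → ℝ) (hμ : IsPMF μ)
    (x x' : Ω → A) (ε ε' : Ω → E) (f : A → E → Z)
    (hNoiseProc : IndepRV μ (fun ω => (ε ω, ε' ω)) (fun ω => (x ω, x' ω)))
    (hNoise : IndepRV μ ε ε') :
    mi μ x x' - mi μ (fun ω => f (x ω) (ε ω)) (fun ω => f (x' ω) (ε' ω))
      = cmi μ (fun ω => f (x ω) (ε ω)) x' (fun ω => f (x' ω) (ε' ω))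
        + cmi μ x x' (fun ω => f (x ω) (ε ω)) := by
  obtain ⟨hpos, hsum⟩ := hμ
  -- the joint weight of the quadruple (x, x', ε, ε') factorises
  have hW : pmfOf μ (fun ω => (x ω, x' ω, ε ω, ε' ω))
      = fun t : A × A × E × E => pmfOf μ (fun ω => (x ω, x' ω)) (t.1, t.2.1) *
          pmfOf μ ε t.2.2.1 * pmfOf μ ε' t.2.2.2 := by
    funext t
    obtain ⟨a, b, e, e'⟩ := t
    have hswap : pmfOf μ (fun ω => (x ω, x' ω, ε ω, ε' ω)) (a, b, e, e')
        = pmfOf μ (fun ω => ((ε ω, ε' ω), (x ω, x' ω))) ((e, e'), (a, b)) := by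
      unfold pmfOf
      refine Finset.sum_congr ?_ fun _ _ => rfl
      ext ω
      simp only [Finset.mem_filter, Finset.mem_univ, true_and, Prod.mk.injEq]
      tauto
    rw [hswap, hNoiseProc (e, e') (a, b), hNoise e e']
    ring
  -- the joint weight of (x, x', z, z') factorises accordingly
  have hPmain : pmfOf μ (fun ω => (x ω, x' ω, f (x ω) (ε ω), f (x' ω) (ε' ω)))
      = fun q : A × A × Z × Z => pmfOf μ (fun ω => (x ω, x' ω)) (q.1, q.2.1) *
          pmfOf (pmfOf μ ε) (f q.1) q.2.2.1 * pmfOf (pmfOf μ ε') (f q.2.1) q.2.2.2 := by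
    funext q
    obtain ⟨a, b, c, c'⟩ := q
    have step := pmfOf_comp' μ (fun ω => (x ω, x' ω, ε ω, ε' ω))
      (fun t => (t.1, t.2.1, f t.1 t.2.2.1, f t.2.1 t.2.2.2)) (a, b, c, c')
    rw [show pmfOf μ (fun ω => (x ω, x' ω, f (x ω) (ε ω), f (x' ω) (ε' ω))) (a, b, c, c')
        = pmfOf (pmfOf μ (fun ω => (x ω, x' ω, ε ω, ε' ω)))
            (fun t : A × A × E × E => (t.1, t.2.1, f t.1 t.2.2.1, f t.2.1 t.2.2.2))
            (a, b, c, c') from step, hW]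
    exact step3' (pmfOf μ (fun ω => (x ω, x' ω))) (pmfOf μ ε) (pmfOf μ ε') f a b c c'
  have e1 : mi μ x x' = mi (pmfOf μ (fun ω => (x ω, x' ω, f (x ω) (ε ω), f (x' ω) (ε' ω))))
      (fun q => q.1) (fun q => q.2.1) :=
    mi_comp' μ (fun ω => (x ω, x' ω, f (x ω) (ε ω), f (x' ω) (ε' ω)))
      (fun q => q.1) (fun q => q.2.1)
  have e2 : mi μ (fun ω => f (x ω) (ε ω)) (fun ω => f (x' ω) (ε' ω))
      = mi (pmfOf μ (fun ω => (x ω, x' ω, f (x ω) (ε ω), f (x' ω) (ε' ω))))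
        (fun q => q.2.2.1) (fun q => q.2.2.2) :=
    mi_comp' μ (fun ω => (x ω, x' ω, f (x ω) (ε ω), f (x' ω) (ε' ω)))
      (fun q => q.2.2.1) (fun q => q.2.2.2)
  have e3 : cmi μ (fun ω => f (x ω) (ε ω)) x' (fun ω => f (x' ω) (ε' ω))
      = cmi (pmfOf μ (fun ω => (x ω, x' ω, f (x ω) (ε ω), f (x' ω) (ε' ω))))
        (fun q => q.2.2.1) (fun q => q.2.1) (fun q => q.2.2.2) :=
    cmi_comp' μ (fun ω => (x ω, x' ω, f (x ω) (ε ω), f (x' ω) (ε' ω)))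
      (fun q => q.2.2.1) (fun q => q.2.1) (fun q => q.2.2.2)
  have e4 : cmi μ x x' (fun ω => f (x ω) (ε ω))
      = cmi (pmfOf μ (fun ω => (x ω, x' ω, f (x ω) (ε ω), f (x' ω) (ε' ω))))
        (fun q => q.1) (fun q => q.2.1) (fun q => q.2.2.1) :=
    cmi_comp' μ (fun ω => (x ω, x' ω, f (x ω) (ε ω), f (x' ω) (ε' ω)))
      (fun q => q.1) (fun q => q.2.1) (fun q => q.2.2.1)
  rw [e1, e2, e3, e4]
  exact key' (pmfOf μ (fun ω => (x ω, x' ω)))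
    (fun a => pmfOf (pmfOf μ ε) (f a)) (fun a => pmfOf (pmfOf μ ε') (f a))
    (fun p => pmfOf_nonneg' hpos _ p)
    (fun a c => pmfOf_nonneg' (fun e => pmfOf_nonneg' hpos ε e) (f a) c)
    (fun a c => pmfOf_nonneg' (fun e => pmfOf_nonneg' hpos ε' e) (f a) c)
    (fun a => by rw [sum_pmfOf', sum_pmfOf', hsum])
    (fun a => by rw [sum_pmfOf', sum_pmfOf', hsum])
    (pmfOf μ (fun ω => (x ω, x' ω, f (x ω) (ε ω), f (x' ω) (ε' ω)))) hPmain
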